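/- Let O be a complete discrete valuation ring with maximal ideal m generated by π, residue characteristic p odd, and let a, b ∈ O be units with a² − 4b a unit. Then F(x) = x⁴ + aπx² + bπ² is irreducible over O. -/

import Mathlib

/-!
A root `r` of `F = X⁴ + aπX² + bπ²` is divisible by `π`, and `r = πs` makes `π ∣ b`, so `0` is a
root of `y² + ay + b` modulo `π`. A factorization of `F` into monic quadratics
`(X² + cX + d)(X² - cX + f)` can be arranged so that `π ∣ d`; then `π ∣ c` as well, and the
identity `d² - aπd + bπ² = c²d` shows that `-d/π` is a root of `y² + ay + b` modulo `π`.
-/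

open Polynomial

theorem Polynomial.Monic.eq_X_sq_add_C_mul_X_add_C {O : Type*} [CommRing O] {p : O[X]}
    (hm : p.Monic) (h : p.natDegree = 2) : p = X ^ 2 + C (p.coeff 1) * X + C (p.coeff 0) := by
  have h2 : p.coeff 2 = 1 := h ▸ hm.coeff_natDegree
  conv_lhs => rw [p.as_sum_range' 3 (by omega)]
  simp [Finset.sum_range_succ, ← C_mul_X_pow_eq_monomial, h2]
  ring

theorem Polynomial.coeffs_of_mul_quadratics_eq {O : Type*} [CommRing O] {c d e f A B : O}
    (h : (X ^ 2 + C c * X + C d) * (X ^ 2 + C e * X + C f) = X ^ 4 + C A * X ^ 2 + C B) :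
    e = -c ∧ d + f - c ^ 2 = A ∧ c * (f - d) = 0 ∧ d * f = B := by
  have hexp : (X ^ 2 + C c * X + C d) * (X ^ 2 + C e * X + C f) = X ^ 4 + C (c + e) * X ^ 3 +
      C (d + f + c * e) * X ^ 2 + C (c * f + d * e) * X + C (d * f) := by
    simp only [C_add, C_mul]
    ring
  rw [hexp] at h
  have h3 := congrArg (coeff · 3) h
  have h2 := congrArg (coeff · 2) h
  have h1 := congrArg (coeff · 1) h
  have h0 := congrArg (coeff · 0) h
  simp only [coeff_add, coeff_C_mul, coeff_X_pow, coeff_X, coeff_C] at h3 h2 h1 h0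
  norm_num at h3 h2 h1 h0
  have he : e = -c := by linear_combination h3
  subst he
  exact ⟨rfl, by linear_combination h2, by linear_combination h1, h0⟩

section Quartic

variable {O : Type*} [CommRing O] [IsDomain O] {π a b : O}

theorem quartic_ne_zero_of_forall_not_dvd (hπ : Prime π)
    (hQ : ∀ r, ¬ π ∣ r ^ 2 + a * r + b) (r : O) : r ^ 4 + a * π * r ^ 2 + b * π ^ 2 ≠ 0 := by
  intro h
  have hr : π ∣ r := hπ.dvd_of_dvd_pow (n := 4) ⟨-(a * r ^ 2 + b * π), by linear_combination h⟩
  obtain ⟨s, rfl⟩ := hr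
  have hs : π ^ 2 * s ^ 4 + a * π * s ^ 2 + b = 0 :=
    mul_left_cancel₀ (pow_ne_zero 2 hπ.ne_zero) (by linear_combination h)
  exact hQ 0 ⟨-(π * s ^ 4 + a * s ^ 2), by linear_combination hs⟩

theorem false_of_quadratic_split (hπ : Prime π) (hQ : ∀ r, ¬ π ∣ r ^ 2 + a * r + b)
    {c d f : O} (hsum : d + f - c ^ 2 = a * π) (hc : c * (f - d) = 0) (hprod : d * f = b * π ^ 2)
    (hd : π ∣ d) : False := by
  obtain ⟨d', rfl⟩ := hd
  have hc : π ∣ c := by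
    rcases mul_eq_zero.mp hc with rfl | hfd
    · exact dvd_zero π
    · exact hπ.dvd_of_dvd_pow (n := 2) ⟨2 * d' - a, by linear_combination hfd - hsum⟩
  obtain ⟨c', rfl⟩ := hc
  have hroot : (-d') ^ 2 + a * (-d') + b = π * (c' ^ 2 * d') :=
    mul_left_cancel₀ (pow_ne_zero 2 hπ.ne_zero) (by linear_combination π * d' * hsum - hprod)
  exact hQ (-d') ⟨_, hroot⟩

theorem false_of_monic_quadratic_factor (hπ : Prime π) (hQ : ∀ r, ¬ π ∣ r ^ 2 + a * r + b)
    {g h : O[X]} (hg : g.Monic) (hh : h.Monic) (hdeg : g.natDegree = 2)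
    (hgh : g * h = X ^ 4 + C (a * π) * X ^ 2 + C (b * π ^ 2)) : False := by
  have hdeg' : h.natDegree = 2 := by
    have hF : (X ^ 4 + C (a * π) * X ^ 2 + C (b * π ^ 2)).natDegree = 4 := by compute_degree!
    have hsum := congrArg natDegree hgh
    rw [hg.natDegree_mul hh, hdeg, hF] at hsum
    omega
  rw [hg.eq_X_sq_add_C_mul_X_add_C hdeg, hh.eq_X_sq_add_C_mul_X_add_C hdeg'] at hgh
  obtain ⟨-, hsum, hc, hprod⟩ := coeffs_of_mul_quadratics_eq hgh
  rcases hπ.dvd_or_dvd ⟨b * π, by rw [hprod]; ring⟩ with hd | hf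
  · exact false_of_quadratic_split hπ hQ hsum hc hprod hd
  · exact false_of_quadratic_split hπ hQ (c := g.coeff 1) (d := h.coeff 0) (f := g.coeff 0)
      (by linear_combination hsum) (by linear_combination -hc) (by linear_combination hprod) hf

theorem irreducible_quartic_of_forall_not_dvd (hπ : Prime π)
    (hQ : ∀ r, ¬ π ∣ r ^ 2 + a * r + b) :
    Irreducible (X ^ 4 + C (a * π) * X ^ 2 + C (b * π ^ 2) : O[X]) := by
  have hm : (X ^ 4 + C (a * π) * X ^ 2 + C (b * π ^ 2) : O[X]).Monic := by monicity!
  have hdeg : (X ^ 4 + C (a * π) * X ^ 2 + C (b * π ^ 2) : O[X]).natDegree = 4 := by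
    compute_degree!
  rw [hm.irreducible_iff_natDegree', hdeg]
  refine ⟨ne_of_apply_ne natDegree (by rw [hdeg, natDegree_one]; norm_num),
    fun g h hg hh hgh hdegh => ?_⟩
  obtain ⟨hpos, hle⟩ := Finset.mem_Ioc.mp hdegh
  obtain h1 | h2 : h.natDegree = 1 ∨ h.natDegree = 2 := by omega
  · rw [hh.eq_X_add_C h1] at hgh
    have hroot := congrArg (eval (-h.coeff 0)) hgh
    simp only [eval_mul, eval_add, eval_X, eval_C, eval_pow] at hroot
    exact quartic_ne_zero_of_forall_not_dvd hπ hQ (-h.coeff 0) (by linear_combination -hroot)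
  · exact false_of_monic_quadratic_factor hπ hQ hh hg h2 (by rw [mul_comm, hgh])

end Quartic

theorem forall_not_dvd_of_irreducible_residue {O : Type*} [CommRing O] [IsLocalRing O]
    {π a b : O} (hπ : IsLocalRing.maximalIdeal O = Ideal.span {π})
    (hresid : Irreducible
      (X ^ 2 + C (IsLocalRing.residue O a) * X + C (IsLocalRing.residue O b))) (r : O) :
    ¬ π ∣ r ^ 2 + a * r + b := by
  intro hr
  have hdeg : (X ^ 2 + C (IsLocalRing.residue O a) * X +
      C (IsLocalRing.residue O b)).natDegree = 2 := by compute_degree!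
  refine hresid.not_isRoot_of_natDegree_ne_one (by omega) (x := IsLocalRing.residue O r) ?_
  rw [← Ideal.mem_span_singleton, ← hπ, ← IsLocalRing.residue_eq_zero_iff] at hr
  simpa using hr

theorem stmt7_general {O : Type*} [CommRing O] [IsDomain O] [IsDiscreteValuationRing O]
    (π a b : O) (hπ : IsLocalRing.maximalIdeal O = Ideal.span {π})
    (hresid : Irreducible
      (X ^ 2 + C (IsLocalRing.residue O a) * X + C (IsLocalRing.residue O b) :
        Polynomial (IsLocalRing.ResidueField O))) :
    Irreducible (X ^ 4 + C (a * π) * X ^ 2 + C (b * π ^ 2) : Polynomial O) :=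
  irreducible_quartic_of_forall_not_dvd
    ((IsDiscreteValuationRing.irreducible_iff_uniformizer π).mpr hπ).prime
    (forall_not_dvd_of_irreducible_residue hπ hresid)

/-- Over a complete DVR `O` with uniformizer `π` and odd residue characteristic, if
`a, b, a² - 4b` are units and the residual polynomial `y² + ā y + b̄` is irreducible over
the residue field, then `F(x) = x⁴ + aπ x² + bπ²` is irreducible over `O`. -/
theorem stmt7 {O : Type*} [CommRing O] [IsDomain O] [IsDiscreteValuationRing O]
    [IsAdicComplete (IsLocalRing.maximalIdeal O) O]
    (π a b : O) (hπ : IsLocalRing.maximalIdeal O = Ideal.span {π})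
    (hres2 : (2 : IsLocalRing.ResidueField O) ≠ 0)
    (ha : IsUnit a) (hb : IsUnit b) (hd : IsUnit (a ^ 2 - 4 * b))
    (hresid : Irreducible
      (X ^ 2 + C (IsLocalRing.residue O a) * X + C (IsLocalRing.residue O b) :
        Polynomial (IsLocalRing.ResidueField O))) :
    Irreducible (X ^ 4 + C (a * π) * X ^ 2 + C (b * π ^ 2) : Polynomial O) :=
  stmt7_general π a b hπ hresid
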